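/- For smooth functions f, g, h : 𝔤* × V* × V → ℝ, the metamorphosis Lie–Poisson bracket defined pointwise by {f,h}(μ,σ,n) := ⟨μ, [u_f, u_h]⟩ + ⟨σ, u_f·ν_h − u_h·ν_f⟩ − ⟨u_f ⋆ a_h − u_h ⋆ a_f, n⟩ + ⟨a_f, ν_h⟩ − ⟨a_h, ν_f⟩ is ℝ-bilinear in (f,h), skew-symmetric ({f,h} = −{h,f}), and satisfies the Jacobi identity {f,{g,h}} + {g,{h,f}} + {h,{f,g}} = 0 identically on 𝔤* × V* × V. -/

import Mathlib

open Module

variable {G V : Type*}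
  [NormedAddCommGroup G] [NormedSpace ℝ G] [FiniteDimensional ℝ G]
  [NormedAddCommGroup V] [NormedSpace ℝ V] [FiniteDimensional ℝ V]

/-- The canonical identification of a continuous functional on the continuous dual of a
finite-dimensional space with an element of the space itself (double-dual representative). -/
noncomputable def rep (T : (G →L[ℝ] ℝ) →L[ℝ] ℝ) : G :=
  (Module.evalEquiv ℝ G).symm
    ((T : (G →L[ℝ] ℝ) →ₗ[ℝ] ℝ) ∘ₗ
      (LinearMap.toContinuousLinearMap : (G →ₗ[ℝ] ℝ) ≃ₗ[ℝ] (G →L[ℝ] ℝ)).toLinearMap)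

/-- The representative `u_f ∈ 𝔤` of the partial derivative `D_μ f(z)`. -/
noncomputable def uRep (f : (G →L[ℝ] ℝ) × (V →L[ℝ] ℝ) × V → ℝ)
    (z : (G →L[ℝ] ℝ) × (V →L[ℝ] ℝ) × V) : G :=
  rep (fderiv ℝ (fun μ' => f (μ', z.2.1, z.2.2)) z.1)

/-- The representative `ν_f ∈ V` of the partial derivative `D_σ f(z)`. -/
noncomputable def νRep (f : (G →L[ℝ] ℝ) × (V →L[ℝ] ℝ) × V → ℝ)
    (z : (G →L[ℝ] ℝ) × (V →L[ℝ] ℝ) × V) : V :=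
  rep (fderiv ℝ (fun σ' => f (z.1, σ', z.2.2)) z.2.1)

/-- `a_f = D_n f(z) ∈ V*`. -/
noncomputable def aRep (f : (G →L[ℝ] ℝ) × (V →L[ℝ] ℝ) × V → ℝ)
    (z : (G →L[ℝ] ℝ) × (V →L[ℝ] ℝ) × V) : V →L[ℝ] ℝ :=
  fderiv ℝ (fun n' => f (z.1, z.2.1, n')) z.2.2

/-- The metamorphosis Lie–Poisson bracket
`{f,h}(μ,σ,n) = ⟨μ,[u_f,u_h]⟩ + ⟨σ, u_f·ν_h − u_h·ν_f⟩ − ⟨u_f ⋆ a_h − u_h ⋆ a_f, n⟩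
 + ⟨a_f, ν_h⟩ − ⟨a_h, ν_f⟩`,
where the Lie bracket on `𝔤` is `bra` and the `𝔤`-action on `V` is `ρ`. -/
noncomputable def pb (bra : G →ₗ[ℝ] G →ₗ[ℝ] G) (ρ : G →ₗ[ℝ] V →ₗ[ℝ] V)
    (f h : (G →L[ℝ] ℝ) × (V →L[ℝ] ℝ) × V → ℝ)
    (z : (G →L[ℝ] ℝ) × (V →L[ℝ] ℝ) × V) : ℝ :=
  z.1 (bra (uRep f z) (uRep h z))
  + z.2.1 (ρ (uRep f z) (νRep h z) - ρ (uRep h z) (νRep f z))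
  - ((aRep h z) (ρ (uRep f z) z.2.2) - (aRep f z) (ρ (uRep h z) z.2.2))
  + (aRep f z) (νRep h z) - (aRep h z) (νRep f z)

section Aux

set_option linter.unusedSectionVars false

local notation "W" => ((G →L[ℝ] ℝ) × (V →L[ℝ] ℝ) × V)

lemma rep_apply (T : (G →L[ℝ] ℝ) →L[ℝ] ℝ) (φ : G →L[ℝ] ℝ) : φ (rep T) = T φ := by
  have h1 : φ (rep T) = (φ : G →ₗ[ℝ] ℝ) (rep T) := rfl
  rw [h1, rep, Module.apply_evalEquiv_symm_apply]
  have h2 : LinearMap.toContinuousLinearMap ((φ : G →ₗ[ℝ] ℝ)) = φ :=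
    ContinuousLinearMap.coe_injective (LinearMap.coe_toContinuousLinearMap _)
  simp [h2]

lemma rep_add (T T' : (G →L[ℝ] ℝ) →L[ℝ] ℝ) : rep (T + T') = rep T + rep T' := by
  simp only [rep, ContinuousLinearMap.coe_add, LinearMap.add_comp, map_add]

lemma rep_smul (c : ℝ) (T : (G →L[ℝ] ℝ) →L[ℝ] ℝ) : rep (c • T) = c • rep T := by
  simp only [rep, ContinuousLinearMap.coe_smul, LinearMap.smul_comp, map_smul]

noncomputable def iot1 : (G →L[ℝ] ℝ) →L[ℝ] W :=
  ContinuousLinearMap.inl ℝ _ _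

noncomputable def iot2 : (V →L[ℝ] ℝ) →L[ℝ] W :=
  (ContinuousLinearMap.inr ℝ (G →L[ℝ] ℝ) ((V →L[ℝ] ℝ) × V)).comp
    (ContinuousLinearMap.inl ℝ (V →L[ℝ] ℝ) V)

noncomputable def iot3 : V →L[ℝ] W :=
  (ContinuousLinearMap.inr ℝ (G →L[ℝ] ℝ) ((V →L[ℝ] ℝ) × V)).comp
    (ContinuousLinearMap.inr ℝ (V →L[ℝ] ℝ) V)

noncomputable def Uc (α : W →L[ℝ] ℝ) : G := rep (α.comp iot1)
noncomputable def Nc (α : W →L[ℝ] ℝ) : V := rep (α.comp iot2)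
noncomputable def Ac (α : W →L[ℝ] ℝ) : V →L[ℝ] ℝ := α.comp iot3

@[simp] lemma Uc_add (α β : W →L[ℝ] ℝ) : Uc (α + β) = Uc α + Uc β := by
  simp [Uc, ContinuousLinearMap.add_comp, rep_add]
@[simp] lemma Uc_smul (c : ℝ) (α : W →L[ℝ] ℝ) : Uc (c • α) = c • Uc α := by
  simp [Uc, ContinuousLinearMap.smul_comp, rep_smul]
@[simp] lemma Nc_add (α β : W →L[ℝ] ℝ) : Nc (α + β) = Nc α + Nc β := by
  simp [Nc, ContinuousLinearMap.add_comp, rep_add]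
@[simp] lemma Nc_smul (c : ℝ) (α : W →L[ℝ] ℝ) : Nc (c • α) = c • Nc α := by
  simp [Nc, ContinuousLinearMap.smul_comp, rep_smul]
@[simp] lemma Ac_add (α β : W →L[ℝ] ℝ) : Ac (α + β) = Ac α + Ac β := by
  simp [Ac, ContinuousLinearMap.add_comp]
@[simp] lemma Ac_smul (c : ℝ) (α : W →L[ℝ] ℝ) : Ac (c • α) = c • Ac α := by
  simp [Ac, ContinuousLinearMap.smul_comp]

lemma pair1 (β : W →L[ℝ] ℝ) (ξ : G →L[ℝ] ℝ) : β (iot1 ξ) = ξ (Uc β) :=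
  (rep_apply (β.comp iot1) ξ).symm
lemma pair2 (β : W →L[ℝ] ℝ) (ξ : V →L[ℝ] ℝ) : β (iot2 ξ) = ξ (Nc β) :=
  (rep_apply (β.comp iot2) ξ).symm
lemma pair3 (β : W →L[ℝ] ℝ) (v : V) : β (iot3 v) = Ac β v := rfl

lemma pair_decomp (β : W →L[ℝ] ℝ) (w : W) :
    β w = β (iot1 w.1) + β (iot2 w.2.1) + β (iot3 w.2.2) := by
  rw [← map_add, ← map_add]
  congr 1
  simp [iot1, iot2, iot3, Prod.ext_iff]

end Aux

section Aux2
set_option linter.unusedSectionVars false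

local notation "W" => ((G →L[ℝ] ℝ) × (V →L[ℝ] ℝ) × V)

lemma uRep_eq {f : W → ℝ} {z : W} (hf : DifferentiableAt ℝ f z) :
    uRep f z = Uc (fderiv ℝ f z) := by
  have h1 : HasFDerivAt (fun μ' : G →L[ℝ] ℝ => (μ', z.2.1, z.2.2)) iot1 z.1 := by
    have h := (iot1.hasFDerivAt (x := z.1)).add_const ((0 : G →L[ℝ] ℝ), z.2.1, z.2.2)
    refine h.congr_of_eventuallyEq (Filter.Eventually.of_forall fun μ' => ?_)
    simp [iot1, Prod.ext_iff]
  have h2 := hf.hasFDerivAt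
  have h3 : (z.1, z.2.1, z.2.2) = z := by simp
  rw [← h3] at h2
  have h4 := h2.comp z.1 h1
  unfold uRep Uc
  rw [show (fun μ' : G →L[ℝ] ℝ => f (μ', z.2.1, z.2.2)) =
    (f ∘ fun μ' : G →L[ℝ] ℝ => (μ', z.2.1, z.2.2)) from rfl, h4.fderiv, h3]

lemma nuRep_eq {f : W → ℝ} {z : W} (hf : DifferentiableAt ℝ f z) :
    νRep f z = Nc (fderiv ℝ f z) := by
  have h1 : HasFDerivAt (fun σ' : V →L[ℝ] ℝ => ((z.1 : G →L[ℝ] ℝ), σ', z.2.2)) iot2 z.2.1 := by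
    have h := (iot2.hasFDerivAt (x := z.2.1)).add_const (z.1, (0 : V →L[ℝ] ℝ), z.2.2)
    refine h.congr_of_eventuallyEq (Filter.Eventually.of_forall fun σ' => ?_)
    simp [iot2, Prod.ext_iff]
  have h2 := hf.hasFDerivAt
  have h3 : (z.1, z.2.1, z.2.2) = z := by simp
  rw [← h3] at h2
  have h4 := h2.comp z.2.1 h1
  unfold νRep Nc
  rw [show (fun σ' : V →L[ℝ] ℝ => f (z.1, σ', z.2.2)) =
    (f ∘ fun σ' : V →L[ℝ] ℝ => (z.1, σ', z.2.2)) from rfl, h4.fderiv, h3]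

lemma aRep_eq {f : W → ℝ} {z : W} (hf : DifferentiableAt ℝ f z) :
    aRep f z = Ac (fderiv ℝ f z) := by
  have h1 : HasFDerivAt (fun n' : V => ((z.1 : G →L[ℝ] ℝ), z.2.1, n')) iot3 z.2.2 := by
    have h := (iot3.hasFDerivAt (x := z.2.2)).add_const (z.1, z.2.1, (0 : V))
    refine h.congr_of_eventuallyEq (Filter.Eventually.of_forall fun n' => ?_)
    simp [iot3, Prod.ext_iff]
  have h2 := hf.hasFDerivAt
  have h3 : (z.1, z.2.1, z.2.2) = z := by simp
  rw [← h3] at h2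
  have h4 := h2.comp z.2.2 h1
  unfold aRep Ac
  rw [show (fun n' : V => f (z.1, z.2.1, n')) =
    (f ∘ fun n' : V => (z.1, z.2.1, n')) from rfl, h4.fderiv, h3]

variable (bra : G →ₗ[ℝ] G →ₗ[ℝ] G) (ρ : G →ₗ[ℝ] V →ₗ[ℝ] V)

/-- Linear (in `z`) part of the Hamiltonian vector field. -/
noncomputable def X0map (w : W) (α : W →L[ℝ] ℝ) : W :=
  (LinearMap.toContinuousLinearMap
      ((w.1 : G →L[ℝ] ℝ).toLinearMap ∘ₗ bra (Uc α)
        - (w.2.1 : V →L[ℝ] ℝ).toLinearMap ∘ₗ ρ.flip (Nc α)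
        + (Ac α).toLinearMap ∘ₗ ρ.flip w.2.2),
    LinearMap.toContinuousLinearMap ((w.2.1 : V →L[ℝ] ℝ).toLinearMap ∘ₗ ρ (Uc α)),
    - ρ (Uc α) w.2.2)

/-- Full Hamiltonian vector field map. -/
noncomputable def Xmap (z : W) (α : W →L[ℝ] ℝ) : W :=
  X0map bra ρ z α + (0, Ac α, - Nc α)

@[simp] lemma X0map_fst_apply (w : W) (α : W →L[ℝ] ℝ) (x : G) :
    (X0map bra ρ w α).1 x
      = w.1 (bra (Uc α) x) - w.2.1 (ρ x (Nc α)) + Ac α (ρ x w.2.2) := by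
  simp [X0map]

@[simp] lemma X0map_snd_apply (w : W) (α : W →L[ℝ] ℝ) (v : V) :
    (X0map bra ρ w α).2.1 v = w.2.1 (ρ (Uc α) v) := by
  simp [X0map]

@[simp] lemma X0map_thd (w : W) (α : W →L[ℝ] ℝ) :
    (X0map bra ρ w α).2.2 = - ρ (Uc α) w.2.2 := rfl

@[simp] lemma Xmap_fst_apply (z : W) (α : W →L[ℝ] ℝ) (x : G) :
    (Xmap bra ρ z α).1 x
      = z.1 (bra (Uc α) x) - z.2.1 (ρ x (Nc α)) + Ac α (ρ x z.2.2) := by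
  simp [Xmap]

@[simp] lemma Xmap_snd_apply (z : W) (α : W →L[ℝ] ℝ) (v : V) :
    (Xmap bra ρ z α).2.1 v = z.2.1 (ρ (Uc α) v) + Ac α v := by
  simp [Xmap]

@[simp] lemma Xmap_thd (z : W) (α : W →L[ℝ] ℝ) :
    (Xmap bra ρ z α).2.2 = - ρ (Uc α) z.2.2 - Nc α := by
  simp [Xmap, sub_eq_add_neg]

lemma X0map_pair (w : W) (α β : W →L[ℝ] ℝ) :
    β (X0map bra ρ w α)
      = w.1 (bra (Uc α) (Uc β)) + w.2.1 (ρ (Uc α) (Nc β)) - w.2.1 (ρ (Uc β) (Nc α))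
        + Ac α (ρ (Uc β) w.2.2) - Ac β (ρ (Uc α) w.2.2) := by
  rw [pair_decomp, pair1, pair2, pair3]
  simp only [X0map_fst_apply, X0map_snd_apply, X0map_thd, map_neg]
  ring

lemma Xmap_pair (z : W) (α β : W →L[ℝ] ℝ) :
    β (Xmap bra ρ z α)
      = z.1 (bra (Uc α) (Uc β)) + z.2.1 (ρ (Uc α) (Nc β)) - z.2.1 (ρ (Uc β) (Nc α))
        + Ac α (ρ (Uc β) z.2.2) - Ac β (ρ (Uc α) z.2.2)
        + Ac α (Nc β) - Ac β (Nc α) := by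
  rw [pair_decomp, pair1, pair2, pair3]
  simp only [Xmap_fst_apply, Xmap_snd_apply, Xmap_thd, map_sub, map_neg, map_add]
  ring

end Aux2

section Aux3
set_option linter.unusedSectionVars false

local notation "W" => ((G →L[ℝ] ℝ) × (V →L[ℝ] ℝ) × V)

variable (bra : G →ₗ[ℝ] G →ₗ[ℝ] G) (ρ : G →ₗ[ℝ] V →ₗ[ℝ] V)

lemma pb_eq {f h : W → ℝ} {z : W} (hf : DifferentiableAt ℝ f z)
    (hh : DifferentiableAt ℝ h z) :
    pb bra ρ f h z = fderiv ℝ h z (Xmap bra ρ z (fderiv ℝ f z)) := by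
  rw [Xmap_pair]
  unfold pb
  rw [uRep_eq hf, uRep_eq hh, nuRep_eq hf, nuRep_eq hh, aRep_eq hf, aRep_eq hh]
  simp only [map_sub]
  ring

lemma bra_anti (hskew : ∀ x : G, bra x x = 0) (x y : G) : bra x y = - bra y x := by
  have h := hskew (x + y)
  simp only [map_add, LinearMap.add_apply, hskew] at h
  rw [eq_neg_iff_add_eq_zero]
  linear_combination (norm := abel) h

lemma Xpair_skew (hskew : ∀ x : G, bra x x = 0) (z : W) (α β : W →L[ℝ] ℝ) :
    β (Xmap bra ρ z α) = - α (Xmap bra ρ z β) := by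
  rw [Xmap_pair, Xmap_pair, bra_anti bra hskew (Uc β) (Uc α), map_neg]
  ring

lemma cyc_identity (hskew : ∀ x : G, bra x x = 0)
    (hjac : ∀ x y z : G, bra x (bra y z) + bra y (bra z x) + bra z (bra x y) = 0)
    (hrep : ∀ (x y : G) (v : V), ρ (bra x y) v = ρ x (ρ y v) - ρ y (ρ x v))
    (z : W) (α β γ : W →L[ℝ] ℝ) :
    γ (X0map bra ρ (Xmap bra ρ z α) β)
      + α (X0map bra ρ (Xmap bra ρ z β) γ)
      + β (X0map bra ρ (Xmap bra ρ z γ) α) = 0 := by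
  rw [X0map_pair, X0map_pair, X0map_pair]
  simp only [Xmap_fst_apply, Xmap_snd_apply, Xmap_thd]
  set u₁ := Uc α; set u₂ := Uc β; set u₃ := Uc γ
  set ν₁ := Nc α; set ν₂ := Nc β; set ν₃ := Nc γ
  set a₁ := Ac α; set a₂ := Ac β; set a₃ := Ac γ
  have hz := congrArg z.1 (hjac u₁ u₂ u₃)
  simp only [map_add, map_zero] at hz
  simp only [hrep, map_sub, map_add, map_neg]
  linear_combination hz

end Aux3

section Aux4
set_option linter.unusedSectionVars false

noncomputable instance instNACGWd : NormedAddCommGroup (((G →L[ℝ] ℝ) × (V →L[ℝ] ℝ) × V) →L[ℝ] ℝ) :=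
  inferInstance
noncomputable instance instNSWd : NormedSpace ℝ (((G →L[ℝ] ℝ) × (V →L[ℝ] ℝ) × V) →L[ℝ] ℝ) :=
  inferInstance

local notation "W" => ((G →L[ℝ] ℝ) × (V →L[ℝ] ℝ) × V)

variable (bra : G →ₗ[ℝ] G →ₗ[ℝ] G) (ρ : G →ₗ[ℝ] V →ₗ[ℝ] V)

noncomputable def X0L : W →ₗ[ℝ] (W →L[ℝ] ℝ) →ₗ[ℝ] W :=
  LinearMap.mk₂ ℝ (X0map bra ρ)
    (fun w w' α => by
      refine Prod.ext ?_ (Prod.ext ?_ ?_)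
      · exact ContinuousLinearMap.ext fun x => by
          simp [Prod.fst_add, Prod.snd_add]; ring
      · exact ContinuousLinearMap.ext fun v => by
          simp [Prod.fst_add, Prod.snd_add]
      · simp [Prod.snd_add, map_add]; abel)
    (fun c w α => by
      refine Prod.ext ?_ (Prod.ext ?_ ?_)
      · exact ContinuousLinearMap.ext fun x => by
          simp [Prod.smul_fst, Prod.smul_snd, smul_eq_mul]; ring
      · exact ContinuousLinearMap.ext fun v => by
          simp [Prod.smul_fst, Prod.smul_snd, smul_eq_mul]
      · simp [Prod.smul_snd, map_smul])
    (fun w α α' => by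
      refine Prod.ext ?_ (Prod.ext ?_ ?_)
      · exact ContinuousLinearMap.ext fun x => by
          simp [map_add]; ring
      · exact ContinuousLinearMap.ext fun v => by
          simp [map_add]
      · simp [map_add]; abel)
    (fun c α α' => by
      refine Prod.ext ?_ (Prod.ext ?_ ?_)
      · exact ContinuousLinearMap.ext fun x => by
          simp [map_smul, smul_eq_mul]; ring
      · exact ContinuousLinearMap.ext fun v => by
          simp [map_smul, smul_eq_mul]
      · simp [map_smul])

noncomputable def X0cAux : W →ₗ[ℝ] ((W →L[ℝ] ℝ) →L[ℝ] W) where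
  toFun w := LinearMap.toContinuousLinearMap (X0L bra ρ w)
  map_add' w w' := by simp only [map_add]
  map_smul' c w := by simp only [map_smul, RingHom.id_apply]

noncomputable def X0c : W →L[ℝ] (W →L[ℝ] ℝ) →L[ℝ] W :=
  LinearMap.toContinuousLinearMap (E := W) (F' := (W →L[ℝ] ℝ) →L[ℝ] W) (X0cAux bra ρ)

@[simp] lemma X0c_apply (z : W) (α : W →L[ℝ] ℝ) :
    X0c bra ρ z α = X0map bra ρ z α := by
  simp [X0c, X0cAux, X0L]

noncomputable def Kc : (W →L[ℝ] ℝ) →L[ℝ] W :=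
  LinearMap.toContinuousLinearMap (E := W →L[ℝ] ℝ) (F' := W)
    { toFun := fun α => ((0 : G →L[ℝ] ℝ), Ac α, - Nc α)
      map_add' := fun α β => by simp [Prod.ext_iff]; abel
      map_smul' := fun c α => by simp [Prod.ext_iff, Prod.smul_fst, Prod.smul_snd] }

@[simp] lemma Kc_apply (α : W →L[ℝ] ℝ) :
    Kc α = (((0 : G →L[ℝ] ℝ), Ac α, - Nc α) : W) := by
  simp [Kc]

lemma Xmap_eq (z : W) (α : W →L[ℝ] ℝ) :
    Xmap bra ρ z α = X0c bra ρ z α + Kc α := by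
  rw [X0c_apply, Kc_apply]; rfl

@[simp] lemma Xmap_add_right (z : W) (α β : W →L[ℝ] ℝ) :
    Xmap bra ρ z (α + β) = Xmap bra ρ z α + Xmap bra ρ z β := by
  simp only [Xmap_eq, map_add]; abel

@[simp] lemma Xmap_smul_right (z : W) (c : ℝ) (α : W →L[ℝ] ℝ) :
    Xmap bra ρ z (c • α) = c • Xmap bra ρ z α := by
  simp only [Xmap_eq, map_smul, smul_add]

end Aux4

section Aux5
set_option linter.unusedSectionVars false

local notation "W" => ((G →L[ℝ] ℝ) × (V →L[ℝ] ℝ) × V)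

variable (bra : G →ₗ[ℝ] G →ₗ[ℝ] G) (ρ : G →ₗ[ℝ] V →ₗ[ℝ] V)

set_option maxHeartbeats 2000000 in
lemma pb_outer {f g h : W → ℝ} (hf : ContDiff ℝ (⊤ : ℕ∞) f) (hg : ContDiff ℝ (⊤ : ℕ∞) g)
    (hh : ContDiff ℝ (⊤ : ℕ∞) h) (z : W) :
    pb bra ρ f (pb bra ρ g h) z
      = fderiv ℝ (fderiv ℝ h) z (Xmap bra ρ z (fderiv ℝ f z)) (Xmap bra ρ z (fderiv ℝ g z))
        + fderiv ℝ h z (X0map bra ρ (Xmap bra ρ z (fderiv ℝ f z)) (fderiv ℝ g z))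
        + fderiv ℝ h z
            (Xmap bra ρ z (fderiv ℝ (fderiv ℝ g) z (Xmap bra ρ z (fderiv ℝ f z)))) := by
  have hdf : Differentiable ℝ f := hf.differentiable (by simp)
  have hdg : Differentiable ℝ g := hg.differentiable (by simp)
  have hdh : Differentiable ℝ h := hh.differentiable (by simp)
  have hg' : HasFDerivAt (fderiv ℝ g) (fderiv ℝ (fderiv ℝ g) z) z :=
    (((hg.fderiv_right (m := (⊤ : ℕ∞)) (by simp)).differentiable (by simp)) z).hasFDerivAt
  have hh' : HasFDerivAt (fderiv ℝ h) (fderiv ℝ (fderiv ℝ h) z) z :=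
    (((hh.fderiv_right (m := (⊤ : ℕ∞)) (by simp)).differentiable (by simp)) z).hasFDerivAt
  have hY1 := ((X0c bra ρ).isBoundedBilinearMap.hasFDerivAt (z, fderiv ℝ g z)).comp z
      ((hasFDerivAt_id z).prodMk hg')
  have hY2 := (Kc (G := G) (V := V)).hasFDerivAt.comp z hg'
  have hY := hY1.add hY2
  have hY' : HasFDerivAt (fun z' : W => Xmap bra ρ z' (fderiv ℝ g z'))
      (((X0c bra ρ).isBoundedBilinearMap.deriv (z, fderiv ℝ g z)).comp
          ((ContinuousLinearMap.id ℝ W).prod (fderiv ℝ (fderiv ℝ g) z))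
        + (Kc (G := G) (V := V)).comp (fderiv ℝ (fderiv ℝ g) z)) z := by
    simpa only [Function.comp_def, Pi.add_def, id, ← Xmap_eq] using hY
  have hF := (isBoundedBilinearMap_apply.hasFDerivAt
      (fderiv ℝ h z, Xmap bra ρ z (fderiv ℝ g z))).comp z (hh'.prodMk hY')
  have hpbgh : pb bra ρ g h = fun z' => fderiv ℝ h z' (Xmap bra ρ z' (fderiv ℝ g z')) :=
    funext fun z' => pb_eq bra ρ (hdg z') (hdh z')
  rw [pb_eq bra ρ (hdf z) (by rw [hpbgh]; exact hF.differentiableAt), hpbgh]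
  rw [show (fun z' : W => (fderiv ℝ h z') (Xmap bra ρ z' (fderiv ℝ g z')))
      = ((fun p : (W →L[ℝ] ℝ) × W => p.1 p.2) ∘
          fun x : W => (fderiv ℝ h x, Xmap bra ρ x (fderiv ℝ g x))) from rfl, hF.fderiv]
  simp only [ContinuousLinearMap.coe_comp', Function.comp_apply,
    IsBoundedBilinearMap.deriv_apply, ContinuousLinearMap.prod_apply,
    ContinuousLinearMap.add_apply, ContinuousLinearMap.id_apply, X0c_apply, map_add]
  rw [Xmap_eq bra ρ z (fderiv ℝ (fderiv ℝ g) z (Xmap bra ρ z (fderiv ℝ f z)))]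
  simp only [X0c_apply, map_add]
  ring

end Aux5
set_option maxHeartbeats 3000000 in

/-- The metamorphosis Lie–Poisson bracket is bilinear, skew-symmetric and satisfies
the Jacobi identity on smooth functions. -/
theorem lie_poisson_bracket_properties
    (bra : G →ₗ[ℝ] G →ₗ[ℝ] G)
    (hskew : ∀ x : G, bra x x = 0)
    (hjac : ∀ x y z : G, bra x (bra y z) + bra y (bra z x) + bra z (bra x y) = 0)
    (ρ : G →ₗ[ℝ] V →ₗ[ℝ] V)
    (hrep : ∀ (x y : G) (v : V), ρ (bra x y) v = ρ x (ρ y v) - ρ y (ρ x v)) :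
    -- bilinearity in (f, h)
    (∀ f₁ f₂ h : (G →L[ℝ] ℝ) × (V →L[ℝ] ℝ) × V → ℝ,
      ContDiff ℝ (⊤ : ℕ∞) f₁ → ContDiff ℝ (⊤ : ℕ∞) f₂ → ContDiff ℝ (⊤ : ℕ∞) h →
      ∀ z, pb bra ρ (f₁ + f₂) h z = pb bra ρ f₁ h z + pb bra ρ f₂ h z)
    ∧ (∀ (c : ℝ) (f h : (G →L[ℝ] ℝ) × (V →L[ℝ] ℝ) × V → ℝ),
      ContDiff ℝ (⊤ : ℕ∞) f → ContDiff ℝ (⊤ : ℕ∞) h →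
      ∀ z, pb bra ρ (c • f) h z = c * pb bra ρ f h z)
    ∧ (∀ f h₁ h₂ : (G →L[ℝ] ℝ) × (V →L[ℝ] ℝ) × V → ℝ,
      ContDiff ℝ (⊤ : ℕ∞) f → ContDiff ℝ (⊤ : ℕ∞) h₁ → ContDiff ℝ (⊤ : ℕ∞) h₂ →
      ∀ z, pb bra ρ f (h₁ + h₂) z = pb bra ρ f h₁ z + pb bra ρ f h₂ z)
    ∧ (∀ (c : ℝ) (f h : (G →L[ℝ] ℝ) × (V →L[ℝ] ℝ) × V → ℝ),
      ContDiff ℝ (⊤ : ℕ∞) f → ContDiff ℝ (⊤ : ℕ∞) h →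
      ∀ z, pb bra ρ f (c • h) z = c * pb bra ρ f h z)
    -- skew-symmetry
    ∧ (∀ f h : (G →L[ℝ] ℝ) × (V →L[ℝ] ℝ) × V → ℝ,
      ContDiff ℝ (⊤ : ℕ∞) f → ContDiff ℝ (⊤ : ℕ∞) h →
      ∀ z, pb bra ρ f h z = - pb bra ρ h f z)
    -- Jacobi identity
    ∧ (∀ f g h : (G →L[ℝ] ℝ) × (V →L[ℝ] ℝ) × V → ℝ,
      ContDiff ℝ (⊤ : ℕ∞) f → ContDiff ℝ (⊤ : ℕ∞) g → ContDiff ℝ (⊤ : ℕ∞) h →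
      ∀ z, pb bra ρ f (pb bra ρ g h) z + pb bra ρ g (pb bra ρ h f) z
          + pb bra ρ h (pb bra ρ f g) z = 0) := by
  constructor
  · intro f₁ f₂ h hf₁ hf₂ hh z
    have d1 := hf₁.differentiable (by simp)
    have d2 := hf₂.differentiable (by simp)
    have dh := hh.differentiable (by simp)
    have hadd : DifferentiableAt ℝ (f₁ + f₂) z := (d1 z).add (d2 z)
    have hfd : fderiv ℝ (f₁ + f₂) z = fderiv ℝ f₁ z + fderiv ℝ f₂ z :=
      fderiv_add (d1 z) (d2 z)
    rw [pb_eq bra ρ hadd (dh z), pb_eq bra ρ (d1 z) (dh z), pb_eq bra ρ (d2 z) (dh z),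
      hfd, Xmap_add_right, map_add]
  constructor
  · intro c f h hf hh z
    have df := hf.differentiable (by simp)
    have dh := hh.differentiable (by simp)
    have hsm : DifferentiableAt ℝ (c • f) z := (df z).const_smul c
    have hfd : fderiv ℝ (c • f) z = c • fderiv ℝ f z := fderiv_const_smul (df z) c
    rw [pb_eq bra ρ hsm (dh z), pb_eq bra ρ (df z) (dh z), hfd, Xmap_smul_right,
      map_smul, smul_eq_mul]
  constructor
  · intro f h₁ h₂ hf hh₁ hh₂ z
    have df := hf.differentiable (by simp)
    have d1 := hh₁.differentiable (by simp)
    have d2 := hh₂.differentiable (by simp)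
    have hadd : DifferentiableAt ℝ (h₁ + h₂) z := (d1 z).add (d2 z)
    have hfd : fderiv ℝ (h₁ + h₂) z = fderiv ℝ h₁ z + fderiv ℝ h₂ z :=
      fderiv_add (d1 z) (d2 z)
    rw [pb_eq bra ρ (df z) hadd, pb_eq bra ρ (df z) (d1 z), pb_eq bra ρ (df z) (d2 z),
      hfd, ContinuousLinearMap.add_apply]
  constructor
  · intro c f h hf hh z
    have df := hf.differentiable (by simp)
    have dh := hh.differentiable (by simp)
    have hsm : DifferentiableAt ℝ (c • h) z := (dh z).const_smul c
    have hfd : fderiv ℝ (c • h) z = c • fderiv ℝ h z := fderiv_const_smul (dh z) c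
    rw [pb_eq bra ρ (df z) hsm, pb_eq bra ρ (df z) (dh z), hfd,
      ContinuousLinearMap.smul_apply, smul_eq_mul]
  constructor
  · intro f h hf hh z
    have df := hf.differentiable (by simp)
    have dh := hh.differentiable (by simp)
    rw [pb_eq bra ρ (df z) (dh z), pb_eq bra ρ (dh z) (df z)]
    exact Xpair_skew bra ρ hskew z (fderiv ℝ f z) (fderiv ℝ h z)
  · intro f g h hf hg hh z
    rw [pb_outer bra ρ hf hg hh z, pb_outer bra ρ hg hh hf z, pb_outer bra ρ hh hf hg z]
    set Yf := Xmap bra ρ z (fderiv ℝ f z) with hYf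
    set Yg := Xmap bra ρ z (fderiv ℝ g z) with hYg
    set Yh := Xmap bra ρ z (fderiv ℝ h z) with hYh
    have symf : IsSymmSndFDerivAt ℝ f z := hf.contDiffAt.isSymmSndFDerivAt (by rw [minSmoothness_of_isRCLikeNormedField]; exact WithTop.coe_le_coe.mpr le_top)
    have symg : IsSymmSndFDerivAt ℝ g z := hg.contDiffAt.isSymmSndFDerivAt (by rw [minSmoothness_of_isRCLikeNormedField]; exact WithTop.coe_le_coe.mpr le_top)
    have symh : IsSymmSndFDerivAt ℝ h z := hh.contDiffAt.isSymmSndFDerivAt (by rw [minSmoothness_of_isRCLikeNormedField]; exact WithTop.coe_le_coe.mpr le_top)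
    have cyc := cyc_identity bra ρ hskew hjac hrep z (fderiv ℝ f z) (fderiv ℝ g z)
      (fderiv ℝ h z)
    have e1 : fderiv ℝ h z (Xmap bra ρ z (fderiv ℝ (fderiv ℝ g) z Yf))
        = - fderiv ℝ (fderiv ℝ g) z Yf Yh := by
      rw [Xpair_skew bra ρ hskew]
    have e2 : fderiv ℝ f z (Xmap bra ρ z (fderiv ℝ (fderiv ℝ h) z Yg))
        = - fderiv ℝ (fderiv ℝ h) z Yg Yf := by
      rw [Xpair_skew bra ρ hskew]
    have e3 : fderiv ℝ g z (Xmap bra ρ z (fderiv ℝ (fderiv ℝ f) z Yh))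
        = - fderiv ℝ (fderiv ℝ f) z Yh Yg := by
      rw [Xpair_skew bra ρ hskew]
    rw [e1, e2, e3]
    linarith [cyc, symf Yg Yh, symg Yh Yf, symh Yf Yg]
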